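/- Let g be a smooth nonnegative function on ℂ with exactly one zero at w₀, satisfying g·∂²g/∂w∂w̄ = (∂g/∂w)·(∂g/∂w̄) on ℂ, with g(w₀) = 0 and dg(w₀) = 0, and with g(w)/|w|² bounded as |w| → ∞. Then g(w) = C·|w − w₀|² for some constant C ≥ 0. -/

import Mathlib

/-- Wirtinger derivative ∂/∂w of a function on ℂ. -/
noncomputable def wd (f : ℂ → ℂ) (w : ℂ) : ℂ :=
  (fderiv ℝ f w 1 - Complex.I * fderiv ℝ f w Complex.I) / 2

/-- Wirtinger derivative ∂/∂w̄ of a function on ℂ. -/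
noncomputable def wdb (f : ℂ → ℂ) (w : ℂ) : ℂ :=
  (fderiv ℝ f w 1 + Complex.I * fderiv ℝ f w Complex.I) / 2

section helpers

lemma clm_apply_decomp {E : Type*} [NormedAddCommGroup E] [NormedSpace ℝ E]
    (T : ℂ →L[ℝ] E) (v : ℂ) : T v = v.re • T 1 + v.im • T Complex.I := by
  have hv : v = v.re • (1 : ℂ) + v.im • Complex.I := by simp [Complex.ext_iff]
  calc T v = T (v.re • (1:ℂ) + v.im • Complex.I) := by rw [← hv]
    _ = v.re • T 1 + v.im • T Complex.I := by rw [map_add, map_smul, map_smul]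

/-- Values of a real-CLM on ℂ in Wirtinger form. -/
lemma clm_wirtinger (T : ℂ →L[ℝ] ℂ) (v : ℂ) :
    T v = (T 1 - Complex.I * T Complex.I) / 2 * v
      + (T 1 + Complex.I * T Complex.I) / 2 * (starRingEnd ℂ) v := by
  rw [clm_apply_decomp T v]
  set x := v.re with hx
  set y := v.im with hy
  have hv : v = (x : ℂ) + y * Complex.I := by
    simp [Complex.ext_iff, hx, hy]
  rw [hv]
  rw [show (starRingEnd ℂ) ((x:ℂ) + y * Complex.I) = (x : ℂ) - y * Complex.I by
    simp [Complex.ext_iff]]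
  simp only [Complex.real_smul]
  ring_nf
  rw [Complex.I_sq]
  ring

lemma fderiv_apply_contDiff {g : ℂ → ℂ} (hg : ContDiff ℝ (⊤ : ℕ∞) g) (v : ℂ) :
    ContDiff ℝ (⊤ : ℕ∞) (fun w => fderiv ℝ g w v) :=
  (hg.fderiv_right (by simp)).clm_apply contDiff_const

lemma wd_contDiff {g : ℂ → ℂ} (hg : ContDiff ℝ (⊤ : ℕ∞) g) : ContDiff ℝ (⊤ : ℕ∞) (wd g) := by
  unfold wd
  exact (((fderiv_apply_contDiff hg 1).sub
    (contDiff_const.mul (fderiv_apply_contDiff hg Complex.I)))).div_const 2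

lemma wdb_mul {u v : ℂ → ℂ} {w : ℂ} (hu : DifferentiableAt ℝ u w)
    (hv : DifferentiableAt ℝ v w) :
    wdb (fun z => u z * v z) w = wdb u w * v w + u w * wdb v w := by
  unfold wdb
  rw [fderiv_fun_mul hu hv]
  simp only [ContinuousLinearMap.add_apply, ContinuousLinearMap.smul_apply, smul_eq_mul]
  ring

lemma wdb_congr {u v : ℂ → ℂ} {w : ℂ} (h : u =ᶠ[nhds w] v) : wdb u w = wdb v w := by
  unfold wdb
  rw [h.fderiv_eq]

lemma im_fderiv_zero {g : ℂ → ℂ} {w : ℂ} (hd : DifferentiableAt ℝ g w)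
    (hgreal : ∀ w, (g w).im = 0) (v : ℂ) : (fderiv ℝ g w v).im = 0 := by
  have h1 : HasFDerivAt (fun w => Complex.imCLM (g w))
      (Complex.imCLM.comp (fderiv ℝ g w)) w :=
    Complex.imCLM.hasFDerivAt.comp w hd.hasFDerivAt
  have h2 : (fun w => Complex.imCLM (g w)) = fun _ => (0 : ℝ) := by
    funext z; exact hgreal z
  rw [h2] at h1
  have h3 : Complex.imCLM.comp (fderiv ℝ g w) = 0 :=
    h1.unique (hasFDerivAt_const 0 w)
  have := congrFun (congrArg DFunLike.coe h3) v
  simpa using this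

lemma wdb_eq_conj_wd {g : ℂ → ℂ} {w : ℂ} (hd : DifferentiableAt ℝ g w)
    (hgreal : ∀ w, (g w).im = 0) : wdb g w = (starRingEnd ℂ) (wd g w) := by
  have h1 := im_fderiv_zero hd hgreal 1
  have hI := im_fderiv_zero hd hgreal Complex.I
  have ha : (starRingEnd ℂ) (fderiv ℝ g w 1) = fderiv ℝ g w 1 :=
    Complex.conj_eq_iff_im.mpr h1
  have hb : (starRingEnd ℂ) (fderiv ℝ g w Complex.I) = fderiv ℝ g w Complex.I :=
    Complex.conj_eq_iff_im.mpr hI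
  unfold wd wdb
  rw [map_div₀, map_sub, map_mul, Complex.conj_I, ha, hb]
  rw [show (starRingEnd ℂ) (2:ℂ) = 2 from Complex.conj_eq_iff_im.mpr rfl]
  ring

lemma hasFDerivAt_fderiv_apply {g : ℂ → ℂ} (hg : ContDiff ℝ (⊤ : ℕ∞) g) (w v : ℂ) :
    HasFDerivAt (fun z => fderiv ℝ g z v)
      ((fderiv ℝ (fderiv ℝ g) w).flip v) w := by
  have h1 : HasFDerivAt (fderiv ℝ g) (fderiv ℝ (fderiv ℝ g) w) w :=
    ((hg.fderiv_right (m := (⊤ : ℕ∞)) (by simp)).differentiable (by simp) w).hasFDerivAt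
  have h2 := (ContinuousLinearMap.apply ℝ ℂ v).hasFDerivAt.comp w h1
  exact h2

lemma wd_wdb_symm {g : ℂ → ℂ} (hg : ContDiff ℝ (⊤ : ℕ∞) g) (w : ℂ) :
    wd (wdb g) w = wdb (wd g) w := by
  set D2 := fderiv ℝ (fderiv ℝ g) w with hD2
  have hsym : D2 1 Complex.I = D2 Complex.I 1 :=
    second_derivative_symmetric
      (f := g) (fun y => ((hg.differentiable (by simp)) y).hasFDerivAt)
      (((hg.fderiv_right (m := (⊤ : ℕ∞)) (by simp)).differentiable (by simp) w).hasFDerivAt) 1 Complex.I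
  have key : ∀ v : ℂ, HasFDerivAt (fun z => fderiv ℝ g z v) (D2.flip v) w :=
    hasFDerivAt_fderiv_apply hg w
  have hwdb : HasFDerivAt (wdb g)
      ((2:ℂ)⁻¹ • (D2.flip 1 + Complex.I • D2.flip Complex.I)) w := by
    have h := (((key 1).add ((key Complex.I).const_mul Complex.I)).const_mul (2:ℂ)⁻¹)
    refine h.congr_of_eventuallyEq ?_
    exact Filter.Eventually.of_forall fun x => div_eq_inv_mul _ _
  have hwd : HasFDerivAt (wd g)
      ((2:ℂ)⁻¹ • (D2.flip 1 - Complex.I • D2.flip Complex.I)) w := by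
    have h := (((key 1).sub ((key Complex.I).const_mul Complex.I)).const_mul (2:ℂ)⁻¹)
    refine h.congr_of_eventuallyEq ?_
    exact Filter.Eventually.of_forall fun x => div_eq_inv_mul _ _
  show (fderiv ℝ (wdb g) w 1 - Complex.I * fderiv ℝ (wdb g) w Complex.I) / 2
    = (fderiv ℝ (wd g) w 1 + Complex.I * fderiv ℝ (wd g) w Complex.I) / 2
  rw [hwdb.fderiv, hwd.fderiv]
  simp only [ContinuousLinearMap.smul_apply, ContinuousLinearMap.add_apply,
    ContinuousLinearMap.sub_apply, ContinuousLinearMap.flip_apply, smul_eq_mul]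
  rw [hsym]
  ring

/-- Cauchy–Riemann: if `wdb f w = 0` and `f` is real-differentiable at `w`,
then `f` is complex-differentiable at `w` with derivative `wd f w`. -/
lemma hasDerivAt_of_wdb_eq_zero {f : ℂ → ℂ} {w : ℂ}
    (hd : DifferentiableAt ℝ f w) (h0 : wdb f w = 0) :
    HasDerivAt f (wd f w) w := by
  set T := fderiv ℝ f w with hT
  have h0' : T 1 + Complex.I * T Complex.I = 0 := by
    have : (T 1 + Complex.I * T Complex.I) / 2 = 0 := h0
    field_simp at this
    simpa using this
  have hTI : T Complex.I = Complex.I * T 1 := by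
    have := h0'
    have h2 : Complex.I * (T 1 + Complex.I * T Complex.I) = 0 := by rw [this]; ring
    rw [mul_add] at h2
    rw [show Complex.I * (Complex.I * T Complex.I) = -T Complex.I by
      rw [← mul_assoc, Complex.I_mul_I]; ring] at h2
    linear_combination -h2
  have hwd : wd f w = T 1 := by
    show (T 1 - Complex.I * T Complex.I) / 2 = T 1
    rw [hTI, ← mul_assoc, Complex.I_mul_I]
    ring
  rw [hasDerivAt_iff_hasFDerivAt, hwd]
  refine hasFDerivAt_of_restrictScalars ℝ hd.hasFDerivAt ?_
  ext v
  show v • T 1 = T v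
  rw [clm_apply_decomp T v, hTI, smul_eq_mul]
  have hv : v = (v.re : ℂ) + v.im * Complex.I := by simp [Complex.ext_iff]
  rw [Complex.real_smul, Complex.real_smul]
  nth_rewrite 1 [hv]
  ring

/-- Every entire function has a primitive. -/
lemma exists_primitive {F : ℂ → ℂ} (hF : Differentiable ℂ F) :
    ∃ E : ℂ → ℂ, ∀ z, HasDerivAt E (F z) z := by
  set a : ℕ → ℂ := fun n => ((Nat.factorial n : ℂ))⁻¹ • iteratedDeriv n F 0 with ha
  have hsum : ∀ z : ℂ, HasSum (fun n : ℕ => a n * z ^ n) (F z) := by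
    intro z
    have h := Complex.hasSum_taylorSeries_of_entire hF 0 z
    simp only [sub_zero] at h
    convert h using 2 with n
    · rfl
    simp only [ha, smul_eq_mul]
    ring
  refine ⟨fun z => ∑' n : ℕ, a n * z ^ (n + 1) / (n + 1), fun y => ?_⟩
  set R : ℝ := ‖y‖ + 1 with hR
  have hRpos : 0 < R := by positivity
  obtain ⟨C, hC⟩ : ∃ C : ℝ, ∀ n, ‖a n * ((2 * R : ℝ) : ℂ) ^ n‖ ≤ C := by
    have h2 := (hsum ((2 * R : ℝ) : ℂ)).summable.tendsto_atTop_zero.norm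
    rw [norm_zero] at h2
    obtain ⟨C, hC⟩ := h2.bddAbove_range
    exact ⟨C, fun n => hC (Set.mem_range_self n)⟩
  have hCn : ∀ n, ‖a n‖ * R ^ n ≤ C * (1/2) ^ n := by
    intro n
    have h1 := hC n
    rw [norm_mul, norm_pow, Complex.norm_real, Real.norm_eq_abs,
      abs_of_pos (by positivity : (0:ℝ) < 2 * R), mul_pow] at h1
    have h2 : (0:ℝ) < 2 ^ n := by positivity
    calc ‖a n‖ * R ^ n = (‖a n‖ * (2 ^ n * R ^ n)) * (1/2)^n := by
          rw [one_div, inv_pow]; field_simp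
      _ ≤ C * (1/2)^n := by
          apply mul_le_mul_of_nonneg_right h1 (by positivity)
  have hu : Summable (fun n => ‖a n‖ * R ^ n) := by
    refine Summable.of_nonneg_of_le (fun n => by positivity) hCn ?_
    exact summable_geometric_two.mul_left C
  have key := hasDerivAt_tsum_of_isPreconnected hu Metric.isOpen_ball
    (convex_ball (0:ℂ) R).isPreconnected
    (g := fun n z => a n * z ^ (n+1) / (n+1)) (g' := fun n z => a n * z ^ n)
    (u := fun n => ‖a n‖ * R ^ n)
    (fun n z _ => ?_) (fun n z hz => ?_) (Metric.mem_ball_self hRpos) ?_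
    (by rw [Metric.mem_ball, dist_zero_right]; exact lt_of_lt_of_le (by linarith) le_rfl)
  · rw [(hsum y).tsum_eq] at key
    exact key
  · have h := ((hasDerivAt_pow (n+1) z).const_mul (a n)).div_const ((n:ℂ)+1)
    convert h using 1
    have hn : ((n:ℂ) + 1) ≠ 0 := Nat.cast_add_one_ne_zero n
    · rfl
    simp only [Nat.add_sub_cancel, Nat.cast_add, Nat.cast_one]
    field_simp
  · rw [Metric.mem_ball, dist_zero_right] at hz
    rw [norm_mul, norm_pow]
    exact mul_le_mul_of_nonneg_left (pow_le_pow_left₀ (norm_nonneg z) hz.le n)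
      (norm_nonneg (a n))
  · apply summable_of_finite_support
    apply Set.Finite.subset (Set.finite_singleton 0)
    intro n hn
    simp only [Function.mem_support] at hn
    by_contra h
    exact hn (by simp [zero_pow (Nat.succ_ne_zero n)])

lemma quad_bound {g : ℂ → ℂ} {w₀ : ℂ} {C : ℝ}
    (hg : ContDiff ℝ (⊤ : ℕ∞) g)
    (hzero : g w₀ = 0)
    (hdg : fderiv ℝ g w₀ = 0)
    (hbdd : ∀ w : ℂ, 1 ≤ ‖w‖ → (g w).re / (‖w‖) ^ 2 ≤ C)
    (hgreal : ∀ w, (g w).im = 0) (hgnonneg : ∀ w, 0 ≤ (g w).re) :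
    ∃ M : ℝ, 0 < M ∧ ∀ w, ‖g w‖ ≤ M * ‖w - w₀‖ ^ 2 := by
  have hnorm : ∀ w, ‖g w‖ = (g w).re := by
    intro w
    rw [show g w = ((g w).re : ℂ) from Complex.ext rfl (by simp [hgreal w])]
    simp [Real.norm_eq_abs, _root_.abs_of_nonneg (hgnonneg w), hgnonneg w]
  obtain ⟨K, t, ht, hK⟩ : ∃ K t, t ∈ nhds w₀ ∧ LipschitzOnWith K (fderiv ℝ g) t := by
    have : ContDiffAt ℝ 1 (fderiv ℝ g) w₀ := ((hg.fderiv_right (m := (⊤ : ℕ∞)) (by simp)).contDiffAt).of_le (by exact_mod_cast le_top)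
    exact this.exists_lipschitzOnWith
  obtain ⟨ε, hε, hball⟩ := Metric.mem_nhds_iff.mp ht
  set δ : ℝ := ε / 2 with hδ
  have hδpos : 0 < δ := by positivity
  have hA : ∀ w, ‖w - w₀‖ ≤ δ → ‖g w‖ ≤ K * ‖w - w₀‖ ^ 2 := by
    intro w hw
    have hsub : Metric.closedBall w₀ ‖w - w₀‖ ⊆ t := by
      intro x hx
      apply hball
      rw [Metric.mem_closedBall] at hx
      rw [Metric.mem_ball]
      calc dist x w₀ ≤ ‖w - w₀‖ := hx
        _ ≤ δ := hw
        _ < ε := by rw [hδ]; linarith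
    have hbound : ∀ x ∈ Metric.closedBall w₀ ‖w - w₀‖,
        ‖fderiv ℝ g x‖ ≤ (K : ℝ) * ‖w - w₀‖ := by
      intro x hx
      have h1 := hK.norm_sub_le (hsub hx) (hball (Metric.mem_ball_self hε))
      rw [hdg, sub_zero] at h1
      calc ‖fderiv ℝ g x‖ ≤ K * ‖x - w₀‖ := h1
        _ ≤ K * ‖w - w₀‖ := by
            apply mul_le_mul_of_nonneg_left _ K.coe_nonneg
            rw [← dist_eq_norm]; exact hx
    have h2 := (convex_closedBall w₀ ‖w - w₀‖).norm_image_sub_le_of_norm_fderiv_le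
      (fun x _ => (hg.differentiable (by simp) x).hasFDerivAt.differentiableAt)
      hbound (Metric.mem_closedBall_self (norm_nonneg _))
      (by rw [Metric.mem_closedBall, dist_eq_norm] : w ∈ Metric.closedBall w₀ ‖w - w₀‖)
    rw [hzero, sub_zero] at h2
    calc ‖g w‖ ≤ K * ‖w - w₀‖ * ‖w - w₀‖ := h2
      _ = K * ‖w - w₀‖ ^ 2 := by ring
  set Rb : ℝ := 2 * ‖w₀‖ + 2 with hRb
  obtain ⟨B, hB⟩ := (isCompact_closedBall w₀ Rb).exists_bound_of_continuousOn
    (hg.continuous.continuousOn (s := Metric.closedBall w₀ Rb))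
  have hBnonneg : 0 ≤ B := le_trans (norm_nonneg _)
    (hB w₀ (Metric.mem_closedBall_self (by positivity)))
  set C₀ : ℝ := max C 0 with hC₀
  set M : ℝ := max (max (K : ℝ) (B / δ ^ 2)) (4 * C₀) + 1 with hM
  have hMpos : 0 < M := by
    have h1 : (0:ℝ) ≤ max (max (K : ℝ) (B / δ ^ 2)) (4 * C₀) :=
      le_trans K.coe_nonneg (le_trans (le_max_left _ _) (le_max_left _ _))
    rw [hM]; linarith
  refine ⟨M, hMpos, fun w => ?_⟩
  rcases le_or_gt ‖w - w₀‖ δ with hw | hw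
  · calc ‖g w‖ ≤ K * ‖w - w₀‖ ^ 2 := hA w hw
      _ ≤ M * ‖w - w₀‖ ^ 2 := by
          apply mul_le_mul_of_nonneg_right _ (by positivity)
          rw [hM]
          have := le_max_left (K:ℝ) (B / δ ^ 2)
          have := le_max_left (max (K : ℝ) (B / δ ^ 2)) (4 * C₀)
          linarith
  rcases le_or_gt ‖w - w₀‖ Rb with hw2 | hw2
  · have h1 : ‖g w‖ ≤ B := hB w (by rwa [Metric.mem_closedBall, dist_eq_norm])
    have h2 : B ≤ B / δ ^ 2 * ‖w - w₀‖ ^ 2 := by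
      rw [div_mul_eq_mul_div, le_div_iff₀ (by positivity)]
      have : δ ^ 2 ≤ ‖w - w₀‖ ^ 2 := by
        apply pow_le_pow_left₀ hδpos.le hw.le
      nlinarith
    calc ‖g w‖ ≤ B / δ ^ 2 * ‖w - w₀‖ ^ 2 := le_trans h1 h2
      _ ≤ M * ‖w - w₀‖ ^ 2 := by
          apply mul_le_mul_of_nonneg_right _ (by positivity)
          rw [hM]
          have := le_max_right (K:ℝ) (B / δ ^ 2)
          have := le_max_left (max (K : ℝ) (B / δ ^ 2)) (4 * C₀)
          linarith
  · have hw0 : ‖w₀‖ ≤ ‖w - w₀‖ := by rw [hRb] at hw2; linarith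
    have hwnorm : 1 ≤ ‖w‖ := by
      have h1 : ‖w - w₀‖ - ‖w₀‖ ≤ ‖w‖ := by
        have := norm_sub_norm_le (w - w₀) (-w₀)
        simpa [sub_neg_eq_add] using this
      rw [hRb] at hw2
      linarith
    have h3 := hbdd w hwnorm
    rw [div_le_iff₀ (by positivity)] at h3
    have h4 : ‖w‖ ≤ 2 * ‖w - w₀‖ := by
      calc ‖w‖ ≤ ‖w - w₀‖ + ‖w₀‖ := by
            have := norm_add_le (w - w₀) w₀
            simpa using this
        _ ≤ 2 * ‖w - w₀‖ := by linarith
    have h5 : (g w).re ≤ C₀ * (2 * ‖w - w₀‖) ^ 2 := by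
      calc (g w).re ≤ C * ‖w‖ ^ 2 := h3
        _ ≤ C₀ * ‖w‖ ^ 2 := by
            apply mul_le_mul_of_nonneg_right (le_max_left _ _) (by positivity)
        _ ≤ C₀ * (2 * ‖w - w₀‖) ^ 2 := by
            apply mul_le_mul_of_nonneg_left _ (le_max_right _ _)
            apply pow_le_pow_left₀ (norm_nonneg _) h4
    rw [hnorm w]
    calc (g w).re ≤ 4 * C₀ * ‖w - w₀‖ ^ 2 := by nlinarith
      _ ≤ M * ‖w - w₀‖ ^ 2 := by
          apply mul_le_mul_of_nonneg_right _ (by positivity)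
          rw [hM]
          have := le_max_right (max (K : ℝ) (B / δ ^ 2)) (4 * C₀)
          linarith

end helpers

theorem stmt3 (g : ℂ → ℂ) (w₀ : ℂ)
    (hg : ContDiff ℝ (⊤ : ℕ∞) g)
    (hgreal : ∀ w, (g w).im = 0)
    (hgnonneg : ∀ w, 0 ≤ (g w).re)
    (hzero : g w₀ = 0)
    (honly : ∀ w, g w = 0 → w = w₀)
    (hdg : fderiv ℝ g w₀ = 0)
    (heq : ∀ w, g w * wd (wdb g) w = wd g w * wdb g w)
    (hbdd : ∃ C : ℝ, ∀ w : ℂ, 1 ≤ ‖w‖ →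
      (g w).re / (‖w‖) ^ 2 ≤ C) :
    ∃ C : ℝ, 0 ≤ C ∧ ∀ w, g w = ((C * (‖w - w₀‖) ^ 2 : ℝ) : ℂ) := by
  classical
  have hdiffg : Differentiable ℝ g := hg.differentiable (by simp)
  have hgne : ∀ w : ℂ, w ≠ w₀ → g w ≠ 0 := fun w hw h => hw (honly w h)
  have hgw_real : ∀ w, g w = ((g w).re : ℂ) :=
    fun w => Complex.ext rfl (by simp [hgreal w])
  have hgpos : ∀ w : ℂ, w ≠ w₀ → 0 < (g w).re := by
    intro w hw
    rcases lt_or_eq_of_le (hgnonneg w) with h | h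
    · exact h
    · exact absurd (by rw [hgw_real w, ← h]; simp) (hgne w hw)
  obtain ⟨C, hC⟩ := hbdd
  obtain ⟨M, hMpos, hM⟩ := quad_bound hg hzero hdg hC hgreal hgnonneg
  have hwdg : ContDiff ℝ (⊤ : ℕ∞) (wd g) := wd_contDiff hg
  set f : ℂ → ℂ := fun w => wd g w / g w with hf
  -- f is real-differentiable away from w₀
  have hfdiffR : ∀ w : ℂ, w ≠ w₀ → DifferentiableAt ℝ f w := by
    intro w hw
    have h1 : DifferentiableAt ℝ (fun w => (g w)⁻¹) w := (hdiffg w).inv (hgne w hw)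
    have h2 := ((hwdg.differentiable (by simp)) w).mul h1
    simp only [hf, div_eq_mul_inv]
    exact h2
  -- wdb f vanishes away from w₀
  have hwdbf : ∀ w : ℂ, w ≠ w₀ → wdb f w = 0 := by
    intro w hw
    have hopen : ∀ᶠ z in nhds w, g z ≠ 0 := by
      have : ContinuousAt g w := (hdiffg w).continuousAt
      exact this.eventually_ne (hgne w hw)
    have hcongr : wd g =ᶠ[nhds w] fun z => f z * g z := by
      filter_upwards [hopen] with z hz
      rw [hf]
      field_simp
    have h1 : wdb (wd g) w = wdb f w * g w + f w * wdb g w := by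
      rw [wdb_congr hcongr]
      exact wdb_mul (hfdiffR w hw) (hdiffg w)
    have h2 : wdb (wd g) w = wd (wdb g) w := (wd_wdb_symm hg w).symm
    have h3 : g w * wd (wdb g) w = wd g w * wdb g w := heq w
    have hg0 : g w ≠ 0 := hgne w hw
    have h4 : wdb f w * g w = 0 := by
      have h5 : g w * (wdb f w * g w + f w * wdb g w) = wd g w * wdb g w := by
        rw [← h1, h2]; exact h3
      have h6 : g w * (f w * wdb g w) = wd g w * wdb g w := by
        rw [hf]
        field_simp
      have h7 : g w * (wdb f w * g w) = 0 := by
        rw [mul_add] at h5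
        rw [h6] at h5
        linear_combination h5
      rcases mul_eq_zero.mp h7 with h | h
      · exact absurd h hg0
      · exact h
    rcases mul_eq_zero.mp h4 with h | h
    · exact h
    · exact absurd h hg0
  -- f is complex-differentiable away from w₀
  have hfdiffC : ∀ w : ℂ, w ≠ w₀ → DifferentiableAt ℂ f w := by
    intro w hw
    exact (hasDerivAt_of_wdb_eq_zero (hfdiffR w hw) (hwdbf w hw)).differentiableAt
  -- pull back along exp
  set φ : ℂ → ℂ := fun z => w₀ + Complex.exp z with hφ
  have hφne : ∀ z, φ z ≠ w₀ := by
    intro z h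
    have : Complex.exp z = 0 := by
      have := h
      rw [hφ] at this
      simpa using this
    exact Complex.exp_ne_zero z this
  set F : ℂ → ℂ := fun z => 2 * f (φ z) * Complex.exp z with hF
  have hφdiff : Differentiable ℂ φ := by
    exact (differentiable_const w₀).add Complex.differentiable_exp
  have hFdiff : Differentiable ℂ F := by
    intro z
    exact ((differentiableAt_const 2).mul
      ((hfdiffC (φ z) (hφne z)).comp z (hφdiff z))).mul Complex.differentiable_exp.differentiableAt
  obtain ⟨E, hE⟩ := exists_primitive hFdiff
  set u : ℂ → ℝ := fun z => Real.log ((g (φ z)).re) with hu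
  -- key derivative computation
  have hkey : ∀ z, HasFDerivAt (fun z => u z - (E z).re) (0 : ℂ →L[ℝ] ℝ) z := by
    intro z
    set w : ℂ := φ z with hw
    have hwne : w ≠ w₀ := hφne z
    have hgwpos : 0 < (g w).re := hgpos w hwne
    -- derivative of φ as a real map
    have hφd : HasFDerivAt φ
        ((ContinuousLinearMap.smulRight (1 : ℂ →L[ℂ] ℂ) (Complex.exp z)).restrictScalars ℝ) z := by
      have h1 : HasDerivAt φ (Complex.exp z) z := by
        exact (Complex.hasDerivAt_exp z).const_add w₀
      exact (hasDerivAt_iff_hasFDerivAt.mp h1).restrictScalars ℝ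
    have hgd : HasFDerivAt g (fderiv ℝ g w) w := (hdiffg w).hasFDerivAt
    have hcomp : HasFDerivAt (fun z => g (φ z))
        ((fderiv ℝ g w).comp
          ((ContinuousLinearMap.smulRight (1 : ℂ →L[ℂ] ℂ) (Complex.exp z)).restrictScalars ℝ)) z :=
      hgd.comp z hφd
    have hre : HasFDerivAt (fun z => (g (φ z)).re)
        (Complex.reCLM.comp ((fderiv ℝ g w).comp
          ((ContinuousLinearMap.smulRight (1 : ℂ →L[ℂ] ℂ) (Complex.exp z)).restrictScalars ℝ))) z :=
      Complex.reCLM.hasFDerivAt.comp z hcomp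
    have hlog : HasFDerivAt u
        (((g w).re)⁻¹ • (Complex.reCLM.comp ((fderiv ℝ g w).comp
          ((ContinuousLinearMap.smulRight (1 : ℂ →L[ℂ] ℂ) (Complex.exp z)).restrictScalars ℝ)))) z :=
      hre.log (ne_of_gt hgwpos)
    have hEd : HasFDerivAt (fun z => (E z).re)
        (Complex.reCLM.comp
          ((ContinuousLinearMap.smulRight (1 : ℂ →L[ℂ] ℂ) (F z)).restrictScalars ℝ)) z :=
      Complex.reCLM.hasFDerivAt.comp z
        ((hasDerivAt_iff_hasFDerivAt.mp (hE z)).restrictScalars ℝ)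
    have hsub := hlog.sub hEd
    refine hsub.congr_fderiv ?_
    apply ContinuousLinearMap.ext
    intro v
    simp only [ContinuousLinearMap.sub_apply, ContinuousLinearMap.smul_apply,
      ContinuousLinearMap.coe_comp', Function.comp_apply,
      ContinuousLinearMap.coe_restrictScalars', ContinuousLinearMap.smulRight_apply,
      ContinuousLinearMap.one_apply, ContinuousLinearMap.zero_apply, smul_eq_mul,
      Complex.reCLM_apply]
    -- now an identity of real numbers
    rw [mul_comm v (Complex.exp z), mul_comm v (F z)]
    have hwirt := clm_wirtinger (fderiv ℝ g w) (Complex.exp z * v)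
    have hconj : wdb g w = (starRingEnd ℂ) (wd g w) := wdb_eq_conj_wd (hdiffg w) hgreal
    have hTa : fderiv ℝ g w (Complex.exp z * v)
        = wd g w * (Complex.exp z * v)
          + (starRingEnd ℂ) (wd g w * (Complex.exp z * v)) := by
      rw [hwirt]
      have e1 : (fderiv ℝ g w 1 - Complex.I * fderiv ℝ g w Complex.I) / 2 = wd g w := rfl
      have e2 : (fderiv ℝ g w 1 + Complex.I * fderiv ℝ g w Complex.I) / 2 = wdb g w := rfl
      rw [e1, e2, hconj]
      simp only [map_mul]
    have hre2 : (fderiv ℝ g w (Complex.exp z * v)).re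
        = 2 * (wd g w * (Complex.exp z * v)).re := by
      rw [hTa]
      simp [Complex.add_re, Complex.conj_re]
      ring
    rw [hre2]
    -- RHS : (F z * v).re
    have hFzv : F z * v = ((2:ℂ) * (wd g w * (Complex.exp z * v))) / ((g w).re : ℂ) := by
      rw [hF]
      show 2 * (wd g w / g w) * Complex.exp z * v = _
      rw [← hgw_real w]
      field_simp
    rw [hFzv, Complex.div_ofReal_re]
    have : ((2:ℂ) * (wd g w * (Complex.exp z * v))).re
        = 2 * (wd g w * (Complex.exp z * v)).re := by
      simp [Complex.mul_re]
    rw [this]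
    field_simp
    simp
  -- conclude u - Re E is constant
  have hconst : ∀ z, u z - (E z).re = u 0 - (E 0).re := by
    intro z
    have hdiffble : Differentiable ℝ (fun z => u z - (E z).re) :=
      fun z => (hkey z).differentiableAt
    have hfd : ∀ z, fderiv ℝ (fun z => u z - (E z).re) z = 0 :=
      fun z => (hkey z).fderiv
    exact is_const_of_fderiv_eq_zero hdiffble hfd z 0
  set c : ℝ := u 0 - (E 0).re with hc
  -- bounded entire function
  set Bf : ℂ → ℂ := fun z => Complex.exp (E z + c - 2 * z) with hBf
  have hEdiff : Differentiable ℂ E := fun z => (hE z).differentiableAt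
  have hBdiff : Differentiable ℂ Bf := by
    apply Differentiable.cexp
    exact (hEdiff.add_const _).sub ((differentiable_const (2:ℂ)).mul differentiable_id)
  have hBnorm : ∀ z, ‖Bf z‖ = (g (φ z)).re / Real.exp (2 * z.re) := by
    intro z
    rw [hBf]
    show ‖Complex.exp (E z + c - 2 * z)‖ = _
    rw [Complex.norm_exp]
    have hre : (E z + (c:ℂ) - 2 * z).re = (E z).re + c - 2 * z.re := by
      simp [Complex.add_re, Complex.sub_re, Complex.mul_re]
    rw [hre]
    have huz : (E z).re + c = u z := by
      have h := hconst z
      linarith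
    rw [show (E z).re + c - 2 * z.re = u z - 2 * z.re by rw [← huz]]
    rw [Real.exp_sub, hu]
    rw [Real.exp_log (hgpos (φ z) (hφne z))]
  have hBbdd : ∀ z, ‖Bf z‖ ≤ M := by
    intro z
    rw [hBnorm z]
    have h1 : (g (φ z)).re ≤ M * ‖φ z - w₀‖ ^ 2 := by
      have := hM (φ z)
      have h2 : (g (φ z)).re ≤ ‖g (φ z)‖ := Complex.re_le_norm _
      linarith
    have h3 : ‖φ z - w₀‖ = Real.exp z.re := by
      rw [hφ]
      simp [Complex.norm_exp]
    rw [div_le_iff₀ (Real.exp_pos _)]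
    calc (g (φ z)).re ≤ M * ‖φ z - w₀‖ ^ 2 := h1
      _ = M * Real.exp (2 * z.re) := by
          rw [h3, ← Real.exp_nat_mul]
          norm_num
  have hbound : Bornology.IsBounded (Set.range Bf) := by
    rw [isBounded_iff_forall_norm_le]
    exact ⟨M, by rintro x ⟨z, rfl⟩; exact hBbdd z⟩
  obtain ⟨b, hb⟩ := hBdiff.exists_const_forall_eq_of_bounded hbound
  refine ⟨‖b‖, norm_nonneg _, fun w => ?_⟩
  rcases eq_or_ne w w₀ with rfl | hw
  · rw [hzero]
    simp
  · set z := Complex.log (w - w₀) with hz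
    have hexp : Complex.exp z = w - w₀ := Complex.exp_log (sub_ne_zero.mpr hw)
    have hφz : φ z = w := by rw [hφ]; show w₀ + Complex.exp z = w; rw [hexp]; ring
    have h1 : ‖Bf z‖ = ‖b‖ := by rw [hb z]
    rw [hBnorm z, hφz] at h1
    have h2 : ‖w - w₀‖ = Real.exp z.re := by
      rw [← hexp, Complex.norm_exp]
    have h3 : (g w).re = ‖b‖ * Real.exp (2 * z.re) := by
      rw [div_eq_iff (Real.exp_pos _).ne'] at h1
      linarith [h1]
    rw [hgw_real w, h3]
    congr 1
    rw [h2, ← Real.exp_nat_mul]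
    norm_num
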